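/- With respect to the ℤ([2]×P)-grading on B(2,P), the ideal J(2,P) is homogeneous. Moreover: (1) T(p) is homogeneous of degree p_1 + p̂; (2) if p ≤ q then S_p(q_2) is homogeneous of degree q_2 − p̂; (3) if p and q are siblings then S_qT_q(p) is homogeneous of degree p_1 + p̂ − q̂; (4) if q is a child of p then D(p)^q is homogeneous of degree q̂ − p̂, and D(p)^p is homogeneous of degree p_2 − p̂. -/

import Mathlib

open scoped Classical

noncomputable section

namespace LP2

variable (k : Type) [Field k] (P : Type) [Fintype P] [PartialOrder P]
variable (root : P) (parent : P → P)

/-- Index set for the `u`-variables: `none` is `u_{∅,ρ}`, and `some ⟨(q,p),_⟩` is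
`u_{q,p}` for the pairs `(q,p)` such that the meet of `q` and `p` is the parent of `p`
(in a tree order this means `parent p ≤ q` and `¬ p ≤ q`). -/
abbrev UPair : Type := {qp : P × P // qp.2 ≠ root ∧ parent qp.2 ≤ qp.1 ∧ ¬ qp.2 ≤ qp.1}

/-- The variables of the ring `B(2,P)`. -/
abbrev Vars : Type := (Fin 2 × P) ⊕ (Option (UPair P root parent))

/-- The ring `B(2,P) = B ⊗_k k[x_{[2]×P}]`. -/
abbrev BR := MvPolynomial (Vars P root parent) k

/-- The variable `p₁ = x_{1,p}`. -/
def x1 (p : P) : BR k P root parent := MvPolynomial.X (Sum.inl ((0 : Fin 2), p))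

/-- The variable `p₂ = x_{2,p}`. -/
def x2 (p : P) : BR k P root parent := MvPolynomial.X (Sum.inl ((1 : Fin 2), p))

/-- The variable `u_{∅,ρ}`. -/
def u0 : BR k P root parent := MvPolynomial.X (Sum.inr none)

/-- The variable `u_{q,p}` (and `0` if `(q,p)` is not a valid pair). -/
def uv (q p : P) : BR k P root parent :=
  if h : p ≠ root ∧ parent p ≤ q ∧ ¬ p ≤ q then
    MvPolynomial.X (Sum.inr (some ⟨(q, p), h⟩)) else 0

/-- `T_c(b) = - ∑_{q ≥ c} q₂ u_{q,b}`, for `c` a sibling of `b` distinct from `b`. -/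
def Tc (c b : P) : BR k P root parent :=
  - ∑ q ∈ Finset.univ.filter (fun q => c ≤ q), x2 k P root parent q * uv k P root parent q b

/-- `T_a(b) = - a₂ u_{a,b}` where `a` is the parent of `b`. -/
def Tpar (b : P) : BR k P root parent :=
  - x2 k P root parent (parent b) * uv k P root parent (parent b) b

/-- The set of siblings of `b` (including `b` itself). -/
def sib (b : P) : Finset P := Finset.univ.filter (fun c => c ≠ root ∧ parent c = parent b)

/-- `T(ρ) = u_{∅,ρ}` and `T(b) = -T_a(b) - ∑_{c sibling of b, c ≠ b} T_c(b)`. -/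
def T (b : P) : BR k P root parent :=
  if b = root then u0 k P root parent
  else - Tpar k P root parent b - ∑ c ∈ (sib P root parent b).erase b, Tc k P root parent c b

/-- The set of children of `a`. -/
def children (a : P) : Finset P := Finset.univ.filter (fun b => b ≠ root ∧ parent b = a)

/-- The symbol `S_cT_c(b)`:  it is `b₁` if `c = b`, `-u_{c,b}` if `c` is the parent of `b`,
and `S_c(T_c(b)) = - ∑_{q ≥ c} S_c(q₂) u_{q,b}` if `c` is a sibling of `b` distinct from `b`. -/
def ST (Sx : P → P → BR k P root parent) (c b : P) : BR k P root parent :=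
  if c = b then x1 k P root parent b
  else if c = parent b then - uv k P root parent c b
  else - ∑ q ∈ Finset.univ.filter (fun q => c ≤ q), Sx c q * uv k P root parent q b

/-- The data of the recursively defined elements `D(a)^x` and `S_a(b₂)` of `B(2,P)`,
pinned down by their defining equations.  `hD` says: for any enumeration
`a = e 0, e 1, …` of `a` together with its children `e 1, …, e m`, the element
`D(a)^{e i}` is the signed maximal minor `(-1)^i |M(a)^{e i}|` of the `m × (m+1)` matrix
`M(a) = [S_{e i}T_{e i}(e (j+1))]`.  (For `a` maximal this gives `D(a)^a = 1`.)
`hSx` says: along any saturated chain `a = c 0 ⋖ c 1 ⋖ ⋯ ⋖ c n = b`,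
`S_a(b₂) = R(a,b) D(b)^b` where `R(a,b) = ∏ D(c i)^{c (i+1)}`. -/
structure DefData where
  D : P → P → BR k P root parent
  Sx : P → P → BR k P root parent
  hD : ∀ (a : P) (m : ℕ) (e : Fin (m+1) → P), Function.Injective e → e 0 = a →
      (∀ j : Fin m, e j.succ ∈ children P root parent a) →
      (∀ b ∈ children P root parent a, ∃ j : Fin m, e j.succ = b) →
      ∀ i : Fin (m+1),
        D a (e i) = (-1 : BR k P root parent) ^ (i : ℕ) *
          Matrix.det (Matrix.of fun (j l : Fin m) =>
            ST k P root parent Sx (e (i.succAbove l)) (e j.succ))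
  hSx : ∀ (n : ℕ) (c : Fin (n+1) → P),
      (∀ i : Fin n, c i.castSucc ⋖ c i.succ) →
      Sx (c 0) (c (Fin.last n)) =
        (∏ i : Fin n, D (c i.castSucc) (c i.succ)) * D (c (Fin.last n)) (c (Fin.last n))

/-- The ideal `J(2,P)`, generated by the deformations `p₁q₂ - T(p)S_p(q₂)` for `p ≤ q`. -/
def Jideal (dd : DefData k P root parent) : Ideal (BR k P root parent) :=
  Ideal.span {f | ∃ p q : P, p ≤ q ∧
    f = x1 k P root parent p * x2 k P root parent q - T k P root parent p * dd.Sx p q}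


/-- The grading group `ℤ([2]×P)`, the free abelian group on the symbols `p₁, p₂`, `p ∈ P`. -/
abbrev Adeg : Type := (Fin 2 × P) →₀ ℤ

/-- `p̂ = p₂ - b¹₁ - ⋯ - bᵐ₁`, where `b¹,…,bᵐ` are the children of `p`. -/
def phat (p : P) : Adeg P :=
  Finsupp.single ((1 : Fin 2), p) 1 -
    ∑ b ∈ children P root parent p, Finsupp.single ((0 : Fin 2), b) 1

/-- The `ℤ([2]×P)`-grading of `B(2,P)`: the variable `pᵢ` has degree `pᵢ`,
`u_{q,p}` has degree `p₁ - q₂ + p̂`, and `u_{∅,ρ}` has degree `ρ₁ + ρ̂`. -/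
def wt : Vars P root parent → Adeg P
  | Sum.inl ip => Finsupp.single ip 1
  | Sum.inr none => Finsupp.single ((0 : Fin 2), root) 1 + phat P root parent root
  | Sum.inr (some qp) =>
      Finsupp.single ((0 : Fin 2), qp.val.2) 1 - Finsupp.single ((1 : Fin 2), qp.val.1) 1 +
        phat P root parent qp.val.2


/-! ### Auxiliary lemmas -/

section Aux

open MvPolynomial Finsupp

variable {σ R M : Type*} [CommRing R] [AddCommMonoid M] {w : σ → M}

private lemma IWH_neg {φ : MvPolynomial σ R} {n : M}
    (h : IsWeightedHomogeneous w φ n) : IsWeightedHomogeneous w (-φ) n := by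
  intro d hd
  exact h (d := d) (by simpa using hd)

private lemma IWH_sub {φ ψ : MvPolynomial σ R} {n : M}
    (h1 : IsWeightedHomogeneous w φ n) (h2 : IsWeightedHomogeneous w ψ n) :
    IsWeightedHomogeneous w (φ - ψ) n := by
  rw [sub_eq_add_neg]; exact h1.add (IWH_neg h2)

private lemma IWH_congr {φ : MvPolynomial σ R} {n n' : M}
    (h : IsWeightedHomogeneous w φ n) (e : n = n') :
    IsWeightedHomogeneous w φ n' := e ▸ h

private lemma IWH_neg_one_pow (i : ℕ) :
    IsWeightedHomogeneous w ((-1 : MvPolynomial σ R) ^ i) 0 := by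
  induction i with
  | zero => simpa using isWeightedHomogeneous_one R w
  | succ i ih =>
      rw [pow_succ, mul_neg_one]
      exact IWH_neg ih

private lemma IWH_det {n : ℕ} (A : Matrix (Fin n) (Fin n) (MvPolynomial σ R))
    {M' : Type*} [AddCommGroup M'] {w : σ → M'} (r c : Fin n → M')
    (h : ∀ i j, IsWeightedHomogeneous w (A i j) (r i + c j)) :
    IsWeightedHomogeneous w A.det (∑ i, r i + ∑ j, c j) := by
  rw [Matrix.det_apply]
  apply IsWeightedHomogeneous.sum
  intro τ _
  have hp : IsWeightedHomogeneous w (∏ i, A (τ i) i) (∑ i, (r (τ i) + c i)) :=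
    IsWeightedHomogeneous.prod _ _ _ (fun i _ => h _ _)
  have he : ∑ i, (r (τ i) + c i) = ∑ i, r i + ∑ j, c j := by
    rw [Finset.sum_add_distrib, Equiv.sum_comp τ r]
  rw [he] at hp
  rcases Int.units_eq_one_or (Equiv.Perm.sign τ) with h1 | h1 <;> rw [h1]
  · simpa using hp
  · simpa [Units.smul_def] using IWH_neg hp

private lemma fin_telescope {A : Type*} [AddCommGroup A] :
    ∀ (n : ℕ) (g : Fin (n + 1) → A),
      ∑ i : Fin n, (g i.succ - g i.castSucc) = g (Fin.last n) - g 0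
  | 0, g => by simp
  | (n + 1), g => by
      rw [Fin.sum_univ_castSucc]
      have ih := fin_telescope n (g ∘ Fin.castSucc)
      simp only [Function.comp] at ih
      simp only [Fin.succ_castSucc, Fin.succ_last]
      rw [ih]
      simp only [Fin.castSucc_zero]
      abel

private lemma sum_equivFin {A P' : Type*} [AddCommMonoid A] (s : Finset P') (g : P' → A) :
    ∑ j : Fin s.card, g (s.equivFin.symm j) = ∑ b ∈ s, g b := by
  rw [← Finset.sum_coe_sort s g]
  exact Equiv.sum_comp s.equivFin.symm (fun x : s => g x)

end Aux

section Main

open MvPolynomial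

variable (k : Type) [Field k] (P : Type) [Fintype P] [PartialOrder P]
variable (root : P) (parent : P → P)

private lemma IWH_x1 (p : P) :
    IsWeightedHomogeneous (wt P root parent) (x1 k P root parent p)
      (Finsupp.single ((0 : Fin 2), p) 1) :=
  isWeightedHomogeneous_X _ _ _

private lemma IWH_x2 (p : P) :
    IsWeightedHomogeneous (wt P root parent) (x2 k P root parent p)
      (Finsupp.single ((1 : Fin 2), p) 1) :=
  isWeightedHomogeneous_X _ _ _

private lemma IWH_uv (q p : P) :
    IsWeightedHomogeneous (wt P root parent) (uv k P root parent q p)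
      (Finsupp.single ((0 : Fin 2), p) 1 - Finsupp.single ((1 : Fin 2), q) 1 +
        phat P root parent p) := by
  unfold uv
  split
  · exact isWeightedHomogeneous_X _ _ _
  · exact isWeightedHomogeneous_zero _ _ _

private lemma IWH_T (p : P) :
    IsWeightedHomogeneous (wt P root parent) (T k P root parent p)
      (Finsupp.single ((0 : Fin 2), p) 1 + phat P root parent p) := by
  unfold T
  split
  · next h =>
      subst h
      exact isWeightedHomogeneous_X _ _ _
  · apply IWH_sub
    · apply IWH_neg
      unfold Tpar
      apply IWH_congr ((IWH_neg (IWH_x2 k P root parent _)).mul (IWH_uv k P root parent _ _))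
      abel
    · apply IsWeightedHomogeneous.sum
      intro c _
      unfold Tc
      apply IWH_neg
      apply IsWeightedHomogeneous.sum
      intro q _
      apply IWH_congr ((IWH_x2 k P root parent _).mul (IWH_uv k P root parent _ _))
      abel

private lemma not_mem_children_self (hpar : ∀ p : P, p ≠ root → parent p ⋖ p) (a : P) :
    a ∉ children P root parent a := by
  intro h
  rw [children, Finset.mem_filter] at h
  have := hpar a h.2.1
  rw [h.2.2] at this
  exact lt_irrefl a this.lt

private lemma children_lt (hpar : ∀ p : P, p ≠ root → parent p ⋖ p) {a b : P}
    (hb : b ∈ children P root parent a) : a < b := by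
  rw [children, Finset.mem_filter] at hb
  have := hpar b hb.2.1
  rw [hb.2.2] at this
  exact this.lt

private lemma cov_children (hroot : ∀ p : P, root ≤ p)
    (htree : ∀ b : P, IsChain (· ≤ ·) {a : P | a ≤ b})
    (hpar : ∀ p : P, p ≠ root → parent p ⋖ p) {x y : P} (h : x ⋖ y) :
    y ∈ children P root parent x := by
  have hyroot : y ≠ root := by
    intro hy
    subst hy
    exact (hroot x).not_gt h.lt
  have hp := hpar y hyroot
  have hxy : x = parent y := by
    by_contra hne
    rcases htree y (show x ∈ {a : P | a ≤ y} from le_of_lt h.lt)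
      (show parent y ∈ {a : P | a ≤ y} from le_of_lt hp.lt) hne with h1 | h1
    · exact h.2 (lt_of_le_of_ne h1 hne) hp.lt
    · exact hp.2 (lt_of_le_of_ne h1 (Ne.symm hne)) h.lt
  rw [children, Finset.mem_filter]
  exact ⟨Finset.mem_univ _, hyroot, hxy.symm⟩

private lemma exists_sat_chain (hroot : ∀ p : P, root ≤ p)
    (htree : ∀ b : P, IsChain (· ≤ ·) {a : P | a ≤ b})
    (hpar : ∀ p : P, p ≠ root → parent p ⋖ p) :
    ∀ b a : P, a ≤ b → ∃ (n : ℕ) (c : Fin (n + 1) → P), c 0 = a ∧ c (Fin.last n) = b ∧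
      ∀ i : Fin n, c i.castSucc ⋖ c i.succ := by
  have wf : WellFounded ((· < ·) : P → P → Prop) := wellFounded_lt
  intro b
  induction b using wf.induction with
  | _ b IH =>
    intro a hab
    rcases eq_or_lt_of_le hab with rfl | hlt
    · exact ⟨0, fun _ => a, rfl, rfl, fun i => i.elim0⟩
    · have hbroot : b ≠ root := by
        intro hb
        subst hb
        exact (hroot a).not_gt hlt
      have hp := hpar b hbroot
      have hapb : a ≤ parent b := by
        by_cases h : a = parent b
        · exact h.le
        · rcases htree b (show a ∈ {x : P | x ≤ b} from hlt.le)
            (show parent b ∈ {x : P | x ≤ b} from hp.lt.le) h with h1 | h1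
          · exact h1
          · exact absurd hlt (hp.2 (lt_of_le_of_ne h1 (Ne.symm h)))
      obtain ⟨n, c, hc0, hclast, hcov⟩ := IH (parent b) hp.lt a hapb
      refine ⟨n + 1, Fin.snoc c b, ?_, ?_, ?_⟩
      · have h0 : (0 : Fin (n + 2)) = Fin.castSucc 0 := rfl
        rw [h0, Fin.snoc_castSucc]
        exact hc0
      · simp
      · intro i
        refine Fin.lastCases ?_ ?_ i
        · rw [Fin.succ_last, Fin.snoc_last, Fin.snoc_castSucc, hclast]
          exact hp
        · intro j
          rw [Fin.succ_castSucc, Fin.snoc_castSucc, Fin.snoc_castSucc]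
          exact hcov j

private lemma main_ind (hroot : ∀ p : P, root ≤ p)
    (htree : ∀ b : P, IsChain (· ≤ ·) {a : P | a ≤ b})
    (hpar : ∀ p : P, p ≠ root → parent p ⋖ p)
    (dd : DefData k P root parent) :
    ∀ a : P,
      (∀ b ∈ children P root parent a,
        IsWeightedHomogeneous (wt P root parent) (dd.D a b)
          (phat P root parent b - phat P root parent a)) ∧
      IsWeightedHomogeneous (wt P root parent) (dd.D a a)
        (Finsupp.single ((1 : Fin 2), a) 1 - phat P root parent a) ∧
      (∀ b, a ≤ b → IsWeightedHomogeneous (wt P root parent) (dd.Sx a b)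
        (Finsupp.single ((1 : Fin 2), b) 1 - phat P root parent a)) := by
  have wfg : WellFounded ((· > ·) : P → P → Prop) := wellFounded_gt
  intro a
  induction a using wfg.induction with
  | _ a IH =>
  have hana : a ∉ children P root parent a := not_mem_children_self P root parent hpar a
  -- homogeneity of the matrix entries
  have hST : ∀ c, (c = a ∨ c ∈ children P root parent a) → ∀ b ∈ children P root parent a,
      IsWeightedHomogeneous (wt P root parent) (ST k P root parent dd.Sx c b)
        (Finsupp.single ((0 : Fin 2), b) 1 + phat P root parent b -
          (if c = a then Finsupp.single ((1 : Fin 2), a) 1 else phat P root parent c)) := by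
    intro c hc b hb
    have hbpar : parent b = a := ((Finset.mem_filter.mp hb).2).2
    unfold ST
    by_cases hcb : c = b
    · rw [if_pos hcb]
      subst hcb
      have hca : c ≠ a := fun h => hana (h ▸ hb)
      rw [if_neg hca]
      apply IWH_congr (IWH_x1 k P root parent c)
      abel
    · rw [if_neg hcb]
      by_cases hcp : c = parent b
      · rw [if_pos hcp]
        have hca : c = a := hcp.trans hbpar
        subst hca
        rw [if_pos rfl]
        apply IWH_congr (IWH_neg (IWH_uv k P root parent c b))
        abel
      · rw [if_neg hcp]
        have hcmem : c ∈ children P root parent a :=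
          hc.resolve_left (fun h => hcp (h.trans hbpar.symm))
        have hca : c ≠ a := fun h => hana (h ▸ hcmem)
        rw [if_neg hca]
        have hSxc := (IH c (children_lt P root parent hpar hcmem)).2.2
        apply IWH_neg
        apply IsWeightedHomogeneous.sum
        intro q hq
        rw [Finset.mem_filter] at hq
        apply IWH_congr ((hSxc q hq.2).mul (IWH_uv k P root parent q b))
        abel
  -- homogeneity of the D's
  obtain ⟨hDchild, hDaa⟩ : (∀ b ∈ children P root parent a,
      IsWeightedHomogeneous (wt P root parent) (dd.D a b)
        (phat P root parent b - phat P root parent a)) ∧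
      IsWeightedHomogeneous (wt P root parent) (dd.D a a)
        (Finsupp.single ((1 : Fin 2), a) 1 - phat P root parent a) := by
    set s := children P root parent a with hs
    set m := s.card with hm
    set e : Fin (m + 1) → P := fun i => Fin.cases a (fun j => ((s.equivFin.symm j : P))) i
      with he
    have he0 : e 0 = a := rfl
    have hesucc : ∀ j : Fin m, e j.succ = (s.equivFin.symm j : P) := fun j => by
      simp only [he, Fin.cases_succ]
    have hmem : ∀ j : Fin m, e j.succ ∈ s := fun j => by
      rw [hesucc]; exact (s.equivFin.symm j).2
    have hmemne : ∀ j : Fin m, e j.succ ≠ a := fun j h => hana (h ▸ hmem j)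
    have hsurj : ∀ b ∈ s, ∃ j : Fin m, e j.succ = b := fun b hb =>
      ⟨s.equivFin ⟨b, hb⟩, by rw [hesucc]; simp⟩
    have hinj : Function.Injective e := by
      intro i j hij
      induction i using Fin.cases with
      | zero =>
        induction j using Fin.cases with
        | zero => rfl
        | succ j =>
          exact absurd (show a ∈ s by rw [← he0, hij]; exact hmem j) hana
      | succ i =>
        induction j using Fin.cases with
        | zero =>
          exact absurd (show a ∈ s by rw [← he0, ← hij]; exact hmem i) hana
        | succ j =>
          rw [hesucc, hesucc] at hij
          exact congrArg Fin.succ (s.equivFin.symm.injective (Subtype.coe_injective hij))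
    have hsum : ∀ (f : P → Adeg P), ∑ j : Fin m, f (e j.succ) = ∑ b ∈ s, f b := by
      intro f
      calc ∑ j : Fin m, f (e j.succ) = ∑ j : Fin m, f (s.equivFin.symm j) := by
            simp only [hesucc]
        _ = ∑ b ∈ s, f b := sum_equivFin s f
    set ν : Fin (m + 1) → Adeg P := fun i' =>
      if e i' = a then Finsupp.single ((1 : Fin 2), a) 1 else phat P root parent (e i') with hν
    have hDdeg : ∀ i : Fin (m + 1), IsWeightedHomogeneous (wt P root parent) (dd.D a (e i))
        (ν i - phat P root parent a) := by
      intro i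
      rw [dd.hD a m e hinj he0 hmem hsurj i]
      have hdet := IWH_det
        (Matrix.of fun (j l : Fin m) => ST k P root parent dd.Sx (e (i.succAbove l)) (e j.succ))
        (r := fun j => Finsupp.single ((0 : Fin 2), e j.succ) 1 + phat P root parent (e j.succ))
        (c := fun l => -(ν (i.succAbove l)))
        (fun j l => by
          have hcmem : e (i.succAbove l) = a ∨ e (i.succAbove l) ∈ s := by
            rcases Fin.eq_zero_or_eq_succ (i.succAbove l) with h | ⟨j', h⟩
            · left; rw [h, he0]
            · right; rw [h]; exact hmem j'
          apply IWH_congr (hST (e (i.succAbove l)) hcmem (e j.succ) (hmem j))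
          simp only [hν]
          abel)
      apply IWH_congr ((IWH_neg_one_pow (w := wt P root parent) (i : ℕ)).mul hdet)
      rw [zero_add]
      have h1 : ∑ j : Fin m,
          (Finsupp.single ((0 : Fin 2), e j.succ) 1 + phat P root parent (e j.succ))
          = (∑ b ∈ s, Finsupp.single ((0 : Fin 2), b) 1) + ∑ b ∈ s, phat P root parent b := by
        rw [Finset.sum_add_distrib,
          hsum (fun b => Finsupp.single ((0 : Fin 2), b) 1), hsum (fun b => phat P root parent b)]
      have h3 : ∑ i' : Fin (m + 1), ν i' =
          Finsupp.single ((1 : Fin 2), a) 1 + ∑ b ∈ s, phat P root parent b := by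
        rw [Fin.sum_univ_succ]
        congr 1
        · simp [hν, he0]
        · rw [← hsum (fun b => phat P root parent b)]
          exact Finset.sum_congr rfl (fun j _ => by simp only [hν, if_neg (hmemne j)])
      have h2 : ∑ l : Fin m, ν (i.succAbove l) =
          (Finsupp.single ((1 : Fin 2), a) 1 + ∑ b ∈ s, phat P root parent b) - ν i := by
        rw [← h3, Fin.sum_univ_succAbove ν i]
        abel
      rw [Finset.sum_neg_distrib, h1, h2]
      have hphat : phat P root parent a =
          Finsupp.single ((1 : Fin 2), a) 1 - ∑ b ∈ s, Finsupp.single ((0 : Fin 2), b) 1 := rfl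
      rw [hphat]
      abel
    constructor
    · intro b hb
      obtain ⟨j, hj⟩ := hsurj b hb
      have hd := hDdeg j.succ
      rw [hj] at hd
      have hbne : b ≠ a := fun h => hana (h ▸ hb)
      simp only [hν, hj, if_neg hbne] at hd
      exact hd
    · have hd := hDdeg 0
      rw [he0] at hd
      simpa [hν, he0] using hd
  refine ⟨hDchild, hDaa, ?_⟩
  intro b hab
  obtain ⟨n, c, hc0, hclast, hcov⟩ := exists_sat_chain P root parent hroot htree hpar b a hab
  have hmono : Monotone c := (Fin.strictMono_iff_lt_succ.mpr (fun i => (hcov i).1)).monotone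
  have hD2 : ∀ x, a ≤ x → (∀ y ∈ children P root parent x,
      IsWeightedHomogeneous (wt P root parent) (dd.D x y)
        (phat P root parent y - phat P root parent x)) ∧
      IsWeightedHomogeneous (wt P root parent) (dd.D x x)
        (Finsupp.single ((1 : Fin 2), x) 1 - phat P root parent x) := by
    intro x hax
    rcases eq_or_lt_of_le hax with rfl | h
    · exact ⟨hDchild, hDaa⟩
    · exact ⟨(IH x h).1, (IH x h).2.1⟩
  rw [← hc0, ← hclast, dd.hSx n c hcov]
  have hprod : IsWeightedHomogeneous (wt P root parent)
      (∏ i : Fin n, dd.D (c i.castSucc) (c i.succ))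
      (∑ i : Fin n, (phat P root parent (c i.succ) - phat P root parent (c i.castSucc))) := by
    apply IsWeightedHomogeneous.prod
    intro i _
    exact (hD2 _ (hc0 ▸ hmono (Fin.zero_le _))).1 _
      (cov_children P root parent hroot htree hpar (hcov i))
  have hlast := (hD2 (c (Fin.last n)) (hc0 ▸ hmono (Fin.zero_le _))).2
  apply IWH_congr (hprod.mul hlast)
  rw [show (∑ i : Fin n, (phat P root parent (c i.succ) - phat P root parent (c i.castSucc)))
      = phat P root parent (c (Fin.last n)) - phat P root parent (c 0) from
    fin_telescope n (fun i => phat P root parent (c i))]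
  abel

end Main


/-- The ideal `J(2,P)` is homogeneous for the `ℤ([2]×P)`-grading
(every weighted homogeneous component of an element of `J(2,P)` lies in `J(2,P)`).
Moreover: (1) `T(p)` is homogeneous of degree `p₁ + p̂`; (2) for `p ≤ q`, `S_p(q₂)` is
homogeneous of degree `q₂ - p̂`; (3) for siblings `p, q`, `S_qT_q(p)` is homogeneous of
degree `p₁ + p̂ - q̂`; (4) for `q` a child of `p`, `D(p)^q` is homogeneous of degree
`q̂ - p̂`, and `D(p)^p` is homogeneous of degree `p₂ - p̂`. -/
theorem Jideal_homogeneous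
    (hroot : ∀ p : P, root ≤ p)
    (htree : ∀ b : P, IsChain (· ≤ ·) {a : P | a ≤ b})
    (hpar : ∀ p : P, p ≠ root → parent p ⋖ p)
    (dd : DefData k P root parent) :
    (∀ f ∈ Jideal k P root parent dd, ∀ d : Adeg P,
      MvPolynomial.weightedHomogeneousComponent (wt P root parent) d f
        ∈ Jideal k P root parent dd) ∧
    (∀ p : P, MvPolynomial.IsWeightedHomogeneous (wt P root parent)
      (T k P root parent p) (Finsupp.single ((0 : Fin 2), p) 1 + phat P root parent p)) ∧
    (∀ p q : P, p ≤ q → MvPolynomial.IsWeightedHomogeneous (wt P root parent)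
      (dd.Sx p q) (Finsupp.single ((1 : Fin 2), q) 1 - phat P root parent p)) ∧
    (∀ p q : P, p ≠ root → q ≠ root → parent p = parent q →
      MvPolynomial.IsWeightedHomogeneous (wt P root parent)
        (ST k P root parent dd.Sx q p)
        (Finsupp.single ((0 : Fin 2), p) 1 + phat P root parent p - phat P root parent q)) ∧
    (∀ p q : P, q ∈ children P root parent p →
      MvPolynomial.IsWeightedHomogeneous (wt P root parent)
        (dd.D p q) (phat P root parent q - phat P root parent p)) ∧
    (∀ p : P, MvPolynomial.IsWeightedHomogeneous (wt P root parent)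
      (dd.D p p) (Finsupp.single ((1 : Fin 2), p) 1 - phat P root parent p)) := by
  have main := main_ind k P root parent hroot htree hpar dd
  have hT := IWH_T k P root parent
  have hSx : ∀ p q : P, p ≤ q → MvPolynomial.IsWeightedHomogeneous (wt P root parent) (dd.Sx p q)
      (Finsupp.single ((1 : Fin 2), q) 1 - phat P root parent p) :=
    fun p q h => (main p).2.2 q h
  refine ⟨?_, hT, hSx, ?_, fun p q hq => (main p).1 q hq, fun p => (main p).2.1⟩
  · -- ideal homogeneity
    letI gr : GradedAlgebra (MvPolynomial.weightedHomogeneousSubmodule k (wt P root parent)) :=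
      MvPolynomial.weightedGradedAlgebra k (wt P root parent)
    have hgen : ∀ f ∈ {f | ∃ p q : P, p ≤ q ∧
        f = x1 k P root parent p * x2 k P root parent q - T k P root parent p * dd.Sx p q},
        SetLike.IsHomogeneousElem (MvPolynomial.weightedHomogeneousSubmodule k (wt P root parent)) f := by
      rintro f ⟨p, q, hpq, rfl⟩
      refine ⟨Finsupp.single ((0 : Fin 2), p) 1 + Finsupp.single ((1 : Fin 2), q) 1, ?_⟩
      rw [MvPolynomial.mem_weightedHomogeneousSubmodule]
      apply IWH_sub ((IWH_x1 k P root parent p).mul (IWH_x2 k P root parent q))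
      apply IWH_congr ((hT p).mul (hSx p q hpq))
      abel
    have hJ := Ideal.homogeneous_span
      (MvPolynomial.weightedHomogeneousSubmodule k (wt P root parent)) _ hgen
    intro f hf d
    have h := hJ d hf
    have hdec : (DirectSum.decompose
        (MvPolynomial.weightedHomogeneousSubmodule k (wt P root parent)) f d :
        BR k P root parent) = MvPolynomial.weightedHomogeneousComponent (wt P root parent) d f :=
      MvPolynomial.weightedDecomposition.decompose'_apply k (wt P root parent) f d
    rwa [hdec] at h
  · -- sibling ST
    intro p q hp hq hpq
    unfold ST
    by_cases hqp : q = p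
    · subst hqp
      rw [if_pos rfl]
      apply IWH_congr (IWH_x1 k P root parent q)
      abel
    · rw [if_neg hqp]
      have hqpp : q ≠ parent p := by
        intro h
        have h2 : parent q = q := by rw [← hpq, ← h]
        exact lt_irrefl q (h2 ▸ (hpar q hq)).lt
      rw [if_neg hqpp]
      apply IWH_neg
      apply MvPolynomial.IsWeightedHomogeneous.sum
      intro r hr
      rw [Finset.mem_filter] at hr
      apply IWH_congr (((main q).2.2 r hr.2).mul (IWH_uv k P root parent r p))
      abel


end LP2
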